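/- arXiv:2207.07956 — 3 statements merged into one kernel-verified Lean document; each statement's English description precedes it below -/
import Mathlib

section
/- The map φ sending an orientation assignment θ : Λ → ZMod q with θ(v) = 0 for every boundary particle v of Λ to the edge labeling that assigns, to each edge of G_Δ with both endpoints in Λ taken in its canonical direction from u to v, the label θ(v) − θ(u) (mod q), and the label 0 to all other edges, is a bijection from {θ : Λ → ZMod q : θ = 0 on all boundary particles of Λ} onto the set of consistent labelings ξ : E(G_Δ) → ZMod q all of whose nonzero-labeled edges have both endpoints in Λ; moreover it preserves weights in the sense that the number of heterogeneous edges h(θ) equals the number of nonzero-labeled edges |E(φ(θ))|, so that γ^{−h(θ)} = γ^{−|E(φ(θ))|} for every γ > 0. -/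
open scoped Classical

/-- Vertices of the triangular lattice on the `m × m` torus. -/
abbrev Vtx (m : ℕ) := ZMod m × ZMod m

/-- The triangular lattice `G_Δ` on the `m × m` torus: `(x,y)` is adjacent to
`(x±1,y)`, `(x,y±1)` and `(x±1,y±1)`. -/
def triGraph (m : ℕ) : SimpleGraph (Vtx m) :=
  SimpleGraph.fromRel (fun u v => v - u = (1, 0) ∨ v - u = (0, 1) ∨ v - u = (1, 1))

/-- The number of lattice edges with exactly one endpoint in `S`: each such unordered
edge is counted exactly once, via the ordered pair whose first coordinate lies in `S`. -/
noncomputable def edgeBoundary {m : ℕ} [NeZero m] (S : Finset (Vtx m)) : ℕ :=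
  Finset.card (Finset.univ.filter
    (fun p : Vtx m × Vtx m => (triGraph m).Adj p.1 p.2 ∧ p.1 ∈ S ∧ p.2 ∉ S))

/-- The perimeter `p` of a region `S`, defined via `e = 2p + 6` where `e` is the number
of lattice edges with exactly one endpoint in `S`. -/
noncomputable def perimS {m : ℕ} [NeZero m] (S : Finset (Vtx m)) : ℝ :=
  ((edgeBoundary S : ℝ) - 6) / 2
/-- A connected hole-free region of `n` sites: it induces a connected subgraph and its
complement induces a connected subgraph. -/
def IsRegion {m : ℕ} [NeZero m] (n : ℕ) (Λ : Finset (Vtx m)) : Prop :=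
  Λ.card = n ∧
  ((triGraph m).induce (↑Λ : Set (Vtx m))).Connected ∧
  ((triGraph m).induce ((↑Λ : Set (Vtx m))ᶜ)).Connected
/-- An edge labeling of `G_Δ` with values in `ZMod q`, encoded as a function on ordered
pairs of vertices; the value on an edge traversed along its canonical direction is the
label, and the value in the opposite direction is its negative. -/
abbrev Lab (m q : ℕ) := Vtx m × Vtx m → ZMod q

/-- The labeling is skew: traversing an edge backwards contributes the negated label. -/
def Skew {m q : ℕ} (ξ : Lab m q) : Prop := ∀ u v : Vtx m, ξ (u, v) = -ξ (v, u)

/-- The labeling is supported on lattice edges. -/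
def SuppAdj {m q : ℕ} (ξ : Lab m q) : Prop :=
  ∀ u v : Vtx m, ¬ (triGraph m).Adj u v → ξ (u, v) = 0

/-- A labeling is consistent if the total flow along every closed walk of `G_Δ` is `0`. -/
def Consistent {m q : ℕ} (ξ : Lab m q) : Prop :=
  ∀ (v : Vtx m) (w : (triGraph m).Walk v v),
    (w.darts.map (fun d => ξ d.toProd)).sum = 0

/-- The support of a labeling: the ordered pairs carrying a nonzero label. -/
def suppSet {m q : ℕ} (ξ : Lab m q) : Set (Vtx m × Vtx m) := {p | ξ p ≠ 0}

/-- Twice the number `|E(ξ)|` of nonzero-labeled edges (ordered-pair count). -/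
noncomputable def suppCard {m q : ℕ} [NeZero m] (ξ : Lab m q) : ℕ :=
  Finset.card (Finset.univ.filter (fun p : Vtx m × Vtx m => ξ p ≠ 0))

/-- The number `|E(ξ)|` of nonzero-labeled edges of a labeling. -/
noncomputable def polyE {m q : ℕ} [NeZero m] (ξ : Lab m q) : ℝ := (suppCard ξ : ℝ) / 2

/-- `V(ξ)`: the number of vertices incident to a nonzero-labeled edge. -/
noncomputable def Vcard {m q : ℕ} [NeZero m] (ξ : Lab m q) : ℕ :=
  Finset.card (Finset.univ.filter (fun v : Vtx m =>
    ∃ p : Vtx m × Vtx m, ξ p ≠ 0 ∧ (v = p.1 ∨ v = p.2)))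

/-- Two edges (given as ordered pairs) are adjacent when they share a vertex. -/
def EdgeAdjP {m : ℕ} (p p' : Vtx m × Vtx m) : Prop :=
  p.1 = p'.1 ∨ p.1 = p'.2 ∨ p.2 = p'.1 ∨ p.2 = p'.2

/-- The set of nonzero-labeled edges of `ξ` is connected under the adjacency in which
two edges are adjacent when they share a vertex. -/
def SuppConnected {m q : ℕ} (ξ : Lab m q) : Prop :=
  ∀ p ∈ suppSet ξ, ∀ p' ∈ suppSet ξ,
    Relation.ReflTransGen
      (fun a b => a ∈ suppSet ξ ∧ b ∈ suppSet ξ ∧ EdgeAdjP a b) p p'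

/-- A polymer: a consistent labeling supported on lattice edges whose nonzero-labeled
edge set is nonempty and connected. -/
def IsPolymer {m q : ℕ} (ξ : Lab m q) : Prop :=
  Skew ξ ∧ SuppAdj ξ ∧ Consistent ξ ∧ (suppSet ξ).Nonempty ∧ SuppConnected ξ

/-- Two polymers are incompatible when some nonzero-labeled edge of one shares a vertex
with a nonzero-labeled edge of the other. -/
def Incompatible {m q : ℕ} (ξ ξ' : Lab m q) : Prop :=
  ∃ p ∈ suppSet ξ, ∃ p' ∈ suppSet ξ', EdgeAdjP p p'

/-- `v` is a boundary particle of `Λ`: it lies in `Λ` and is adjacent to a vertex not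
in `Λ`. -/
def BoundaryParticle {m : ℕ} [NeZero m] (Λ : Finset (Vtx m)) (v : Vtx m) : Prop :=
  v ∈ Λ ∧ ∃ u, (triGraph m).Adj v u ∧ u ∉ Λ

/-- The domain of `φ`: orientation assignments `θ : Λ → ZMod q` (extended by `0` off
`Λ`) that vanish on every boundary particle of `Λ`. -/
def DomSet {m : ℕ} [NeZero m] (q : ℕ) (Λ : Finset (Vtx m)) : Set (Vtx m → ZMod q) :=
  {θ | (∀ v ∉ Λ, θ v = 0) ∧ ∀ v : Vtx m, BoundaryParticle Λ v → θ v = 0}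

/-- The codomain of `φ`: consistent labelings all of whose nonzero-labeled edges have
both endpoints in `Λ`. -/
def CodSet {m : ℕ} [NeZero m] (q : ℕ) (Λ : Finset (Vtx m)) : Set (Lab m q) :=
  {ξ | Skew ξ ∧ SuppAdj ξ ∧ Consistent ξ ∧
    ∀ u v : Vtx m, ξ (u, v) ≠ 0 → u ∈ Λ ∧ v ∈ Λ}

/-- The map `φ`: it labels each edge of `G_Δ` with both endpoints in `Λ`, traversed
from `u` to `v`, by `θ(v) − θ(u) (mod q)`, and labels all other edges `0`. -/
noncomputable def labPhi {m : ℕ} [NeZero m] (q : ℕ) (Λ : Finset (Vtx m))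
    (θ : Vtx m → ZMod q) : Lab m q :=
  fun p => if (triGraph m).Adj p.1 p.2 ∧ p.1 ∈ Λ ∧ p.2 ∈ Λ then θ p.2 - θ p.1 else 0

/-- Twice the number `h(θ)` of heterogeneous edges of `θ` within `Λ`
(ordered-pair count). -/
noncomputable def hetZOrd {m q : ℕ} [NeZero m] (Λ : Finset (Vtx m))
    (θ : Vtx m → ZMod q) : ℕ :=
  Finset.card (Finset.univ.filter (fun p : Vtx m × Vtx m =>
    (triGraph m).Adj p.1 p.2 ∧ p.1 ∈ Λ ∧ p.2 ∈ Λ ∧ θ p.1 ≠ θ p.2))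

/-!
A labeling with zero flow around every closed walk of the (connected) torus is the
coboundary `(u, v) ↦ θ v - θ u` of a potential `θ`, unique up to an additive constant.
Normalize the potential to vanish at a vertex outside `Λ`: since `Λᶜ` is connected and
carries no flow, the potential vanishes on `Λᶜ`, hence also on the boundary particles, which
are joined to `Λᶜ` by edges of label `0`. An edge is heterogeneous for `θ` iff its label
`θ v - θ u` is nonzero.
-/

namespace SimpleGraph

variable {V A : Type*} {G : SimpleGraph V} [AddCommGroup A]

def Walk.flow {u v : V} (w : G.Walk u v) (ξ : V × V → A) : A :=
  (w.darts.map fun d => ξ d.toProd).sum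

@[simp]
lemma Walk.flow_nil {u : V} (ξ : V × V → A) : (Walk.nil : G.Walk u u).flow ξ = 0 := rfl

@[simp]
lemma Walk.flow_cons {u v w : V} (h : G.Adj u v) (p : G.Walk v w) (ξ : V × V → A) :
    (Walk.cons h p).flow ξ = ξ (u, v) + p.flow ξ := by
  simp [Walk.flow]

lemma Walk.flow_append {u v w : V} (p : G.Walk u v) (p' : G.Walk v w) (ξ : V × V → A) :
    (p.append p').flow ξ = p.flow ξ + p'.flow ξ := by
  simp [Walk.flow, Walk.darts_append]

lemma Walk.flow_concat {u v w : V} (p : G.Walk u v) (h : G.Adj v w) (ξ : V × V → A) :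
    (p.concat h).flow ξ = p.flow ξ + ξ (v, w) := by
  simp [Walk.flow, Walk.darts_concat]

lemma Walk.flow_reverse {ξ : V × V → A} (hξ : ∀ u v, ξ (u, v) = -ξ (v, u)) {u v : V}
    (p : G.Walk u v) : p.reverse.flow ξ = -p.flow ξ := by
  induction p with
  | nil => simp
  | cons h p ih =>
    rw [Walk.reverse_cons, Walk.flow_append, ih, Walk.flow_cons, Walk.flow_cons,
      Walk.flow_nil, hξ]
    abel

lemma Walk.flow_eq_flow {ξ : V × V → A} (hξ : ∀ u v, ξ (u, v) = -ξ (v, u))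
    (hclosed : ∀ v (c : G.Walk v v), c.flow ξ = 0) {u v : V} (p p' : G.Walk u v) :
    p.flow ξ = p'.flow ξ := by
  have h := hclosed u (p.append p'.reverse)
  rwa [Walk.flow_append, Walk.flow_reverse hξ, ← sub_eq_add_neg, sub_eq_zero] at h

lemma Walk.apply_eq_of_adj {α : Type*} {f : V → α} (hf : ∀ u v, G.Adj u v → f u = f v)
    {u v : V} (p : G.Walk u v) : f u = f v := by
  induction p with
  | nil => rfl
  | cons h _ ih => exact (hf _ _ h).trans ih

lemma Preconnected.apply_eq_of_adj {α : Type*} (hG : G.Preconnected) {f : V → α}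
    (hf : ∀ u v, G.Adj u v → f u = f v) (u v : V) : f u = f v :=
  (hG u v).elim (Walk.apply_eq_of_adj hf)

variable (G) in
noncomputable def coboundary (θ : V → A) : V × V → A :=
  fun p => if G.Adj p.1 p.2 then θ p.2 - θ p.1 else 0

@[simp]
lemma coboundary_apply_of_adj {θ : V → A} {u v : V} (h : G.Adj u v) :
    G.coboundary θ (u, v) = θ v - θ u :=
  if_pos h

lemma coboundary_apply_of_not_adj {θ : V → A} {u v : V} (h : ¬G.Adj u v) :
    G.coboundary θ (u, v) = 0 :=
  if_neg h

lemma coboundary_swap (θ : V → A) (u v : V) :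
    G.coboundary θ (u, v) = -G.coboundary θ (v, u) := by
  by_cases h : G.Adj u v
  · simp [h, h.symm]
  · rw [coboundary_apply_of_not_adj h, coboundary_apply_of_not_adj (mt G.adj_symm h), neg_zero]

lemma coboundary_sub_const (θ : V → A) (c : A) :
    G.coboundary (fun v => θ v - c) = G.coboundary θ := by
  ext p
  simp only [coboundary, sub_sub_sub_cancel_right]

lemma Walk.flow_coboundary (θ : V → A) {u v : V} (p : G.Walk u v) :
    p.flow (G.coboundary θ) = θ v - θ u := by
  induction p with
  | nil => simp
  | cons h _ ih => rw [Walk.flow_cons, ih, coboundary_apply_of_adj h]; abel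

lemma Preconnected.eq_of_coboundary_eq (hG : G.Preconnected) {θ θ' : V → A}
    (h : G.coboundary θ = G.coboundary θ') {v₀ : V} (h₀ : θ v₀ = θ' v₀) : θ = θ' := by
  have hconst : ∀ u v, G.Adj u v → θ u - θ' u = θ v - θ' v := fun u v huv => by
    have := congrFun h (u, v)
    rw [coboundary_apply_of_adj huv, coboundary_apply_of_adj huv] at this
    exact (sub_eq_sub_iff_sub_eq_sub.mp this).symm
  funext v
  have := hG.apply_eq_of_adj hconst v v₀
  rwa [h₀, sub_self, sub_eq_zero] at this

/-- The potential is the flow along any walk from `v₀`. -/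
lemma Preconnected.exists_coboundary_eq (hG : G.Preconnected) {ξ : V × V → A}
    (hskew : ∀ u v, ξ (u, v) = -ξ (v, u)) (hsupp : ∀ u v, ¬G.Adj u v → ξ (u, v) = 0)
    (hclosed : ∀ v (c : G.Walk v v), c.flow ξ = 0) (v₀ : V) :
    ∃ θ : V → A, G.coboundary θ = ξ := by
  refine ⟨fun v => (hG v₀ v).some.flow ξ, funext fun ⟨u, v⟩ => ?_⟩
  by_cases huv : G.Adj u v
  · rw [coboundary_apply_of_adj huv, Walk.flow_eq_flow hskew hclosed (hG v₀ v).some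
      ((hG v₀ u).some.concat huv), Walk.flow_concat, add_sub_cancel_left]
  · rw [coboundary_apply_of_not_adj huv, hsupp u v huv]

end SimpleGraph

open SimpleGraph

variable {m q : ℕ} {Λ : Finset (Vtx m)}

lemma triGraph_reachable_add (v : Vtx m) {s : Vtx m} (hs : s = (1, 0) ∨ s = (0, 1)) :
    (triGraph m).Reachable v (v + s) := by
  by_cases hv : v = v + s
  · rw [← hv]
  · refine Adj.reachable ?_
    rw [triGraph, fromRel_adj]
    refine ⟨hv, Or.inl ?_⟩
    rw [add_sub_cancel_left]
    tauto

lemma triGraph_reachable_add_nsmul (v : Vtx m) {s : Vtx m} (hs : s = (1, 0) ∨ s = (0, 1))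
    (k : ℕ) : (triGraph m).Reachable v (v + k • s) := by
  induction k with
  | zero => simp
  | succ k ih =>
    rw [succ_nsmul, ← add_assoc]
    exact ih.trans (triGraph_reachable_add _ hs)

variable [NeZero m]

lemma triGraph_preconnected : (triGraph m).Preconnected := by
  have hdecomp : ∀ v : Vtx m, v = (0 + v.1.val • ((1 : ZMod m), (0 : ZMod m)))
      + v.2.val • ((0 : ZMod m), (1 : ZMod m)) := fun v => by
    ext <;> simp
  have hfrom0 : ∀ v : Vtx m, (triGraph m).Reachable 0 v := fun v => by
    rw [hdecomp v]
    exact (triGraph_reachable_add_nsmul 0 (Or.inl rfl) _).trans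
      (triGraph_reachable_add_nsmul _ (Or.inr rfl) _)
  exact fun u v => (hfrom0 u).symm.trans (hfrom0 v)

/-- On `DomSet`, the boundary condition makes `φ(θ)` the full coboundary of `θ`: an edge
leaving `Λ` joins a boundary particle to an outside vertex, both of orientation `0`. -/
lemma labPhi_eq_coboundary {θ : Vtx m → ZMod q} (hθ : θ ∈ DomSet q Λ) :
    labPhi q Λ θ = (triGraph m).coboundary θ := by
  obtain ⟨hoff, hbd⟩ := hθ
  ext ⟨u, v⟩
  by_cases huv : (triGraph m).Adj u v
  · have hzero : ∀ x y, (triGraph m).Adj x y → y ∉ Λ → θ x = 0 := fun x y hxy hy => by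
      by_cases hx : x ∈ Λ
      · exact hbd x ⟨hx, y, hxy, hy⟩
      · exact hoff x hx
    by_cases hu : u ∈ Λ <;> by_cases hv : v ∈ Λ <;>
      simp [labPhi, huv, hu, hv, hzero u v huv, hzero v u huv.symm, hoff]
  · simp [labPhi, huv, coboundary_apply_of_not_adj huv]

lemma mem_of_labPhi_ne_zero {θ : Vtx m → ZMod q} {u v : Vtx m} (h : labPhi q Λ θ (u, v) ≠ 0) :
    u ∈ Λ ∧ v ∈ Λ := by
  by_contra hc
  exact h (if_neg fun hp => hc hp.2)

lemma mapsTo_labPhi : Set.MapsTo (labPhi q Λ) (DomSet q Λ) (CodSet q Λ) := fun θ hθ => by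
  rw [labPhi_eq_coboundary hθ]
  refine ⟨coboundary_swap θ, fun _ _ => coboundary_apply_of_not_adj,
    fun v c => (Walk.flow_coboundary θ c).trans (sub_self _), fun u v h => ?_⟩
  rw [← labPhi_eq_coboundary hθ] at h
  exact mem_of_labPhi_ne_zero h

lemma injOn_labPhi {v₀ : Vtx m} (hv₀ : v₀ ∉ Λ) : Set.InjOn (labPhi q Λ) (DomSet q Λ) :=
  fun θ hθ θ' hθ' h => by
    rw [labPhi_eq_coboundary hθ, labPhi_eq_coboundary hθ'] at h
    exact triGraph_preconnected.eq_of_coboundary_eq h (by rw [hθ.1 v₀ hv₀, hθ'.1 v₀ hv₀])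

lemma surjOn_labPhi {v₀ : Vtx m} (hv₀ : v₀ ∉ Λ)
    (hcompl : ((triGraph m).induce ((↑Λ : Set (Vtx m))ᶜ)).Preconnected) :
    Set.SurjOn (labPhi q Λ) (DomSet q Λ) (CodSet q Λ) := fun ξ hξ => by
  obtain ⟨hskew, hsupp, hcons, hΛ⟩ := hξ
  obtain ⟨θ, rfl⟩ := triGraph_preconnected.exists_coboundary_eq hskew hsupp hcons v₀
  have hedge : ∀ u v, (triGraph m).Adj u v → u ∉ Λ → θ u = θ v := fun u v huv hu => by
    by_contra hne
    refine hu (hΛ u v ?_).1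
    rw [coboundary_apply_of_adj huv, sub_ne_zero]
    exact Ne.symm hne
  have houter : ∀ v ∉ Λ, θ v = θ v₀ := fun v hv =>
    hcompl.apply_eq_of_adj (f := fun x : ((↑Λ : Set (Vtx m))ᶜ : Set (Vtx m)) => θ x)
      (fun a b hab => hedge a b hab a.2) ⟨v, hv⟩ ⟨v₀, hv₀⟩
  have hdom : (fun v => θ v - θ v₀) ∈ DomSet q Λ := by
    refine ⟨fun v hv => show θ v - θ v₀ = 0 by rw [houter v hv, sub_self], ?_⟩
    rintro v ⟨-, u, hvu, hu⟩
    show θ v - θ v₀ = 0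
    rw [← houter u hu, hedge u v hvu.symm hu, sub_self]
  exact ⟨_, hdom, by rw [labPhi_eq_coboundary hdom, coboundary_sub_const]⟩

lemma hetZOrd_eq_suppCard (θ : Vtx m → ZMod q) : hetZOrd Λ θ = suppCard (labPhi q Λ θ) := by
  unfold hetZOrd suppCard
  congr 1
  refine Finset.filter_congr fun p _ => ?_
  by_cases hp : (triGraph m).Adj p.1 p.2 ∧ p.1 ∈ Λ ∧ p.2 ∈ Λ
  · simp [labPhi, hp, sub_eq_zero, eq_comm]
  · simp only [labPhi, if_neg hp, ne_eq, not_true_eq_false, iff_false]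
    tauto

lemma IsRegion.exists_notMem {n : ℕ} (hΛ : IsRegion n Λ) (hmn : (n + 1) ^ 2 ≤ m ^ 2) :
    ∃ v, v ∉ Λ := by
  have hlt : Λ.card < Fintype.card (Vtx m) := by
    rw [hΛ.1, Fintype.card_prod, ZMod.card, ← sq]
    nlinarith
  by_contra! h
  exact hlt.ne ((Finset.card_eq_iff_eq_univ Λ).mpr (Finset.eq_univ_iff_forall.mpr h))

theorem polymer_bijection_general
    (q : ℕ) (m n : ℕ) [NeZero m] (hmn : (n + 1) ^ 2 ≤ m ^ 2)
    (Λ : Finset (Vtx m)) (hΛ : IsRegion n Λ) :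
    Set.BijOn (labPhi q Λ) (DomSet q Λ) (CodSet q Λ) ∧
    ∀ θ ∈ DomSet q Λ,
      ((hetZOrd Λ θ : ℝ) / 2 = polyE (labPhi q Λ θ)) ∧
      ∀ gam : ℝ, 0 < gam →
        gam ^ (-((hetZOrd Λ θ : ℝ) / 2)) = gam ^ (-polyE (labPhi q Λ θ)) := by
  obtain ⟨v₀, hv₀⟩ := hΛ.exists_notMem hmn
  refine ⟨⟨mapsTo_labPhi, injOn_labPhi hv₀, surjOn_labPhi hv₀ hΛ.2.2.preconnected⟩,
    fun θ _ => ?_⟩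
  have hweight : (hetZOrd Λ θ : ℝ) / 2 = polyE (labPhi q Λ θ) := by
    rw [polyE, hetZOrd_eq_suppCard]
  exact ⟨hweight, fun gam _ => by rw [hweight]⟩

/-- Lemma 3.2, the polymer-model bijection.
The map `φ` is a bijection from the orientation assignments on `Λ` vanishing on all
boundary particles of `Λ` onto the set of consistent labelings whose nonzero-labeled
edges have both endpoints in `Λ`; moreover it preserves weights: `h(θ) = |E(φ(θ))|`,
so `γ^{−h(θ)} = γ^{−|E(φ(θ))|}` for every `γ > 0`. -/
theorem polymer_bijection
    (q : ℕ) (hq : 2 ≤ q) (m n : ℕ) [NeZero m] (hmn : (n + 1) ^ 2 ≤ m ^ 2)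
    (Λ : Finset (Vtx m)) (hΛ : IsRegion n Λ) :
    Set.BijOn (labPhi q Λ) (DomSet q Λ) (CodSet q Λ) ∧
    ∀ θ ∈ DomSet q Λ,
      ((hetZOrd Λ θ : ℝ) / 2 = polyE (labPhi q Λ θ)) ∧
      ∀ gam : ℝ, 0 < gam →
        gam ^ (-((hetZOrd Λ θ : ℝ) / 2)) = gam ^ (-polyE (labPhi q Λ θ)) :=
  polymer_bijection_general q m n hmn Λ hΛ
end

section
/- Let k ≥ 1 and ε ∈ (0,1). If y₁, …, y_k ∈ [0,1] satisfy Σ_{i=1}^k y_i = 1 and Σ_{i=1}^k √(y_i) ≤ 1/√(1−ε), then there exists an index i with y_i ≥ 1 − ε. -/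
open Finset

theorem Finset.sum_le_sqrt_mul_sum_sqrt {ι : Type*} (s : Finset ι) {f : ι → ℝ} {c : ℝ}
    (hf : ∀ i ∈ s, 0 ≤ f i) (hc : ∀ i ∈ s, f i ≤ c) :
    ∑ i ∈ s, f i ≤ √c * ∑ i ∈ s, √(f i) := by
  rw [mul_sum]
  refine sum_le_sum fun i hi => ?_
  calc f i = √(f i) * √(f i) := (Real.mul_self_sqrt (hf i hi)).symm
    _ ≤ √c * √(f i) := by gcongr; exact hc i hi

theorem sqrt_sum_pigeonhole_general
    (k : ℕ) (ε : ℝ) (hε1 : ε < 1)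
    (y : Fin k → ℝ) (hy0 : ∀ i, 0 ≤ y i)
    (hsum : ∑ i, y i = 1)
    (hsqrt : ∑ i, Real.sqrt (y i) ≤ 1 / Real.sqrt (1 - ε)) :
    ∃ i, 1 - ε ≤ y i := by
  obtain ⟨i, -, hmax⟩ :=
    exists_max_image univ y (nonempty_of_sum_ne_zero (f := y) (by simp [hsum]))
  have hpos : 0 < √(1 - ε) := Real.sqrt_pos.mpr (by linarith)
  have hbound : 1 ≤ √(y i) / √(1 - ε) :=
    calc 1 = ∑ j, y j := hsum.symm
      _ ≤ √(y i) * ∑ j, √(y j) :=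
        sum_le_sqrt_mul_sum_sqrt _ (fun j _ => hy0 j) hmax
      _ ≤ √(y i) * (1 / √(1 - ε)) := by gcongr
      _ = √(y i) / √(1 - ε) := mul_one_div _ _
  rw [le_div_iff₀ hpos, one_mul] at hbound
  exact ⟨i, (Real.sqrt_le_sqrt_iff (hy0 i)).mp hbound⟩

/-- a pigeonhole inequality for square roots, used in the proof of
Theorem 4.1. If `y₁, …, y_k ∈ [0,1]` satisfy `Σ y_i = 1` and
`Σ √(y_i) ≤ 1/√(1−ε)` for some `ε ∈ (0,1)`, then some `y_i ≥ 1 − ε`. -/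
theorem sqrt_sum_pigeonhole
    (k : ℕ) (hk : 1 ≤ k) (ε : ℝ) (hε0 : 0 < ε) (hε1 : ε < 1)
    (y : Fin k → ℝ) (hy0 : ∀ i, 0 ≤ y i) (hy1 : ∀ i, y i ≤ 1)
    (hsum : ∑ i, y i = 1)
    (hsqrt : ∑ i, Real.sqrt (y i) ≤ 1 / Real.sqrt (1 - ε)) :
    ∃ i, 1 - ε ≤ y i :=
  sqrt_sum_pigeonhole_general k ε hε1 y hy0 hsum hsqrt
end

section
/- Let q ≥ 2 be an integer and let ε ∈ (0, 1/q). Then for every δ ∈ (0,1) with |δ − 1/q| ≥ ε, one has (q(1−δ)/(q−1))^{1−δ} · (qδ)^{δ} ≥ (1 − εq/(q−1))^{(q−1)/q − ε} · (1 + εq)^{1/q + ε}; that is, over the set {δ ∈ (0,1) : |δ − 1/q| ≥ ε}, the function δ ↦ (q(1−δ)/(q−1))^{1−δ}(qδ)^{δ} is minimized at δ = 1/q + ε. -/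
/-!
With `x = 1 - δ` the quantity `(q(1-δ)/(q-1))^{1-δ} (qδ)^δ` is `exp (log q - H_q x)`, where `H_q` is
the `q`-ary entropy, so the claim is that `H_q` restricted to `|x - (1 - 1/q)| ≥ ε` is maximal at
`x = 1 - 1/q - ε`. Since `H_q` increases up to its maximum at `1 - 1/q` and decreases after it, it
remains to compare the two points at distance `ε` from the maximum: for `q ≥ 2` the entropy falls
off more slowly on the left, because `H_q'(c + t) + H_q'(c - t) ≤ 0` around `c = 1 - 1/q`.
-/

open Real Set

lemma deriv_qaryEntropy_sub_add_deriv_qaryEntropy_add_nonpos {q : ℕ} (hq : 2 ≤ q) {s : ℝ}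
    (hs₀ : 0 < s) (hs : s < 1 / q) :
    deriv (qaryEntropy q) (1 - 1 / q - s) + deriv (qaryEntropy q) (1 - 1 / q + s) ≤ 0 := by
  have hq' : (2 : ℝ) ≤ q := by exact_mod_cast hq
  have hinv : 1 / (q : ℝ) ≤ 1 / 2 := one_div_le_one_div_of_le two_pos hq'
  set r : ℝ := 1 / q with hr
  have hrq : (q - 1) * r = 1 - r := by rw [hr]; field_simp
  -- `(q - 1) r = 1 - r` turns this into `(q - 1)² s² ≥ s²`.
  have hprod : (q - 1) ^ 2 * ((r + s) * (r - s)) ≤ (1 - r - s) * (1 - r + s) := by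
    have : (1 : ℝ) ≤ (q - 1) ^ 2 := by nlinarith
    nlinarith [mul_nonneg (sub_nonneg.mpr this) (sq_nonneg s)]
  have hlog := log_le_log (mul_pos (pow_pos (by linarith) 2) (mul_pos (by linarith) (by linarith)))
    hprod
  rw [log_mul (pow_ne_zero 2 (by linarith)) (by nlinarith), log_pow,
    log_mul (by linarith) (by linarith), log_mul (by linarith) (by linarith)] at hlog
  rw [deriv_qaryEntropy (by linarith) (by linarith), deriv_qaryEntropy (by linarith) (by linarith),
    show 1 - (1 - r - s) = r + s by ring, show 1 - (1 - r + s) = r - s by ring]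
  push_cast at hlog
  linarith

lemma qaryEntropy_add_le_qaryEntropy_sub {q : ℕ} (hq : 2 ≤ q) {t : ℝ} (ht₀ : 0 ≤ t)
    (ht : t ≤ 1 / q) :
    qaryEntropy q (1 - 1 / q + t) ≤ qaryEntropy q (1 - 1 / q - t) := by
  have hq' : (2 : ℝ) ≤ q := by exact_mod_cast hq
  have hinv : 1 / (q : ℝ) ≤ 1 / 2 := one_div_le_one_div_of_le two_pos hq'
  set c : ℝ := 1 - 1 / q
  let H := qaryEntropy q
  have hmono : MonotoneOn (fun s ↦ H (c - s) - H (c + s)) (Icc 0 (1 / q)) := by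
    refine monotoneOn_of_hasDerivWithinAt_nonneg
      (f' := fun s ↦ -(deriv H (c - s) + deriv H (c + s))) (convex_Icc _ _) (by fun_prop) (fun s hs ↦ ?_) (fun s hs ↦ ?_) <;>
      obtain ⟨hs₀, hs⟩ : s ∈ Ioo 0 (1 / (q : ℝ)) := by rwa [interior_Icc] at hs
    · have hl := (differentiableAt_qaryEntropy (q := q) (p := c - s) (by linarith)
        (by linarith)).hasDerivAt.comp s ((hasDerivAt_id s).const_sub c)
      have hr := (differentiableAt_qaryEntropy (q := q) (p := c + s) (by linarith)
        (by linarith)).hasDerivAt.comp s ((hasDerivAt_id s).const_add c)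
      exact ((hl.sub hr).congr_deriv (by ring)).hasDerivWithinAt
    · exact neg_nonneg.mpr (deriv_qaryEntropy_sub_add_deriv_qaryEntropy_add_nonpos hq hs₀ hs)
  simpa [H] using hmono ⟨le_rfl, ht₀.trans ht⟩ ⟨ht₀, ht⟩ ht₀

lemma qaryEntropy_le_qaryEntropy_sub_of_le_abs {q : ℕ} (hq : 2 ≤ q) {ε x : ℝ} (hε₀ : 0 ≤ ε)
    (hε : ε < 1 / q) (hx₀ : 0 ≤ x) (hx₁ : x ≤ 1) (hfar : ε ≤ |x - (1 - 1 / q)|) :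
    qaryEntropy q x ≤ qaryEntropy q (1 - 1 / q - ε) := by
  rcases le_abs'.mp hfar with hleft | hright
  · exact (qaryEntropy_strictMonoOn hq).monotoneOn ⟨hx₀, by linarith⟩ ⟨by linarith, by linarith⟩
      (by linarith)
  · calc qaryEntropy q x ≤ qaryEntropy q (1 - 1 / q + ε) :=
          (qaryEntropy_strictAntiOn hq).antitoneOn ⟨by linarith, by linarith⟩ ⟨by linarith, hx₁⟩
            (by linarith)
      _ ≤ qaryEntropy q (1 - 1 / q - ε) := qaryEntropy_add_le_qaryEntropy_sub hq hε₀ hε.le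

lemma rpow_mul_rpow_eq_exp_log_sub_qaryEntropy {q : ℕ} (hq : 2 ≤ q) {δ : ℝ} (hδ₀ : 0 < δ)
    (hδ₁ : δ < 1) :
    ((q : ℝ) * (1 - δ) / (q - 1)) ^ (1 - δ) * ((q : ℝ) * δ) ^ δ
      = exp (log q - qaryEntropy q (1 - δ)) := by
  have hq' : (2 : ℝ) ≤ q := by exact_mod_cast hq
  have h₁ : (0 : ℝ) < q - 1 := by linarith
  have h₂ : (0 : ℝ) < 1 - δ := by linarith
  rw [rpow_def_of_pos (by positivity), rpow_def_of_pos (by positivity), ← exp_add,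
    log_div (by positivity) h₁.ne', log_mul (by positivity) h₂.ne',
    log_mul (by positivity) hδ₀.ne']
  simp only [qaryEntropy, binEntropy, sub_sub_cancel, log_inv]
  push_cast
  congr 1
  ring

/-- analytic minimization from the proof of the connected
non-alignment lemma. For an integer `q ≥ 2` and `ε ∈ (0, 1/q)`, over all
`δ ∈ (0,1)` with `|δ − 1/q| ≥ ε`, the function
`δ ↦ (q(1−δ)/(q−1))^{1−δ}(qδ)^δ` is minimized at `δ = 1/q + ε`; that is,
`(q(1−δ)/(q−1))^{1−δ}(qδ)^δ ≥ (1 − εq/(q−1))^{(q−1)/q − ε}(1 + εq)^{1/q + ε}`. -/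
theorem potts_entropy_minimization
    (q : ℕ) (hq : 2 ≤ q) (ε : ℝ) (hε0 : 0 < ε) (hε1 : ε < 1 / (q : ℝ))
    (δ : ℝ) (hδ0 : 0 < δ) (hδ1 : δ < 1) (hfar : ε ≤ |δ - 1 / (q : ℝ)|) :
    (1 - ε * q / ((q : ℝ) - 1)) ^ (((q : ℝ) - 1) / q - ε) *
        (1 + ε * (q : ℝ)) ^ (1 / (q : ℝ) + ε)
      ≤ ((q : ℝ) * (1 - δ) / ((q : ℝ) - 1)) ^ (1 - δ) * ((q : ℝ) * δ) ^ δ := by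
  have hq' : (2 : ℝ) ≤ q := by exact_mod_cast hq
  have hinv : 1 / (q : ℝ) ≤ 1 / 2 := one_div_le_one_div_of_le two_pos hq'
  have hq₁ : (q : ℝ) - 1 ≠ 0 := by linarith
  have h₁ : 1 - ε * q / ((q : ℝ) - 1) = q * (1 - (1 / q + ε)) / (q - 1) := by
    field_simp
    ring
  have h₂ : ((q : ℝ) - 1) / q - ε = 1 - (1 / q + ε) := by
    field_simp
    ring
  have h₃ : 1 + ε * (q : ℝ) = q * (1 / q + ε) := by
    field_simp
  rw [h₁, h₂, h₃, rpow_mul_rpow_eq_exp_log_sub_qaryEntropy hq (by positivity) (by linarith),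
    rpow_mul_rpow_eq_exp_log_sub_qaryEntropy hq hδ0 hδ1, exp_le_exp, sub_le_sub_iff_left, ← sub_sub]
  refine qaryEntropy_le_qaryEntropy_sub_of_le_abs hq hε0.le hε1 (by linarith) (by linarith) ?_
  rwa [sub_sub_sub_cancel_left, abs_sub_comm]
end
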